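/- arXiv:2210.04281 — 3 statements merged into one kernel-verified Lean document; each statement's English description precedes it below -/
import Mathlib

section
/- Let V be a finite dimensional vector space over a finite field F with basis B. The nonzero component union graph UG(V) is chordal if and only if either dim(V) = 1, or dim(V) ∈ {2, 3} and |F| = 2. -/
/-- The skeleton (support) of a vector with respect to a basis. -/
def skel {F V : Type*} [Field F] [AddCommGroup V] [Module F V] {n : ℕ}
    (B : Module.Basis (Fin n) F V) (a : V) : Set (Fin n) := {i | B.repr a i ≠ 0}

/-- The nonzero component graph IG(V) with respect to a basis: vertices are the
nonzero vectors, and distinct `a, b` are adjacent iff their skeletons intersect. -/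
def compGraph {F V : Type*} [Field F] [AddCommGroup V] [Module F V] {n : ℕ}
    (B : Module.Basis (Fin n) F V) : SimpleGraph {a : V // a ≠ 0} where
  Adj a b := a ≠ b ∧ (skel B a.1 ∩ skel B b.1).Nonempty
  symm := by
    constructor
    rintro a b ⟨hne, h⟩
    exact ⟨hne.symm, by rwa [Set.inter_comm]⟩
  loopless := ⟨fun a h => h.1 rfl⟩

/-- The nonzero component union graph UG(V) with respect to a basis: vertices are
the nonzero vectors, and distinct `a, b` are adjacent iff the union of their
skeletons is the whole basis. -/
def compUnionGraph {F V : Type*} [Field F] [AddCommGroup V] [Module F V] {n : ℕ}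
    (B : Module.Basis (Fin n) F V) : SimpleGraph {a : V // a ≠ 0} where
  Adj a b := a ≠ b ∧ skel B a.1 ∪ skel B b.1 = Set.univ
  symm := by
    constructor
    rintro a b ⟨hne, h⟩
    exact ⟨hne.symm, by rwa [Set.union_comm]⟩
  loopless := ⟨fun a h => h.1 rfl⟩

/-- A graph is chordal if it contains no induced cycle of length at least 4
(graph embeddings are precisely induced subgraph inclusions). -/
def IsChordal {α : Type*} (G : SimpleGraph α) : Prop :=
  ∀ m : ℕ, 4 ≤ m → IsEmpty (SimpleGraph.cycleGraph m ↪g G)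

open SimpleGraph

/-! ### Auxiliary lemmas on `Fin` and cycle graphs -/

lemma UGaux.fin_val_three (k : ℕ) : ((3 : Fin (k+4)) : ℕ) = 3 := by
  rw [show ((3 : Fin (k+4)) : ℕ) = 3 % (k+4) from rfl]
  exact Nat.mod_eq_of_lt (by omega)

lemma UGaux.cyc_adj_succ (k : ℕ) (i : Fin (k+4)) : (cycleGraph (k+4)).Adj i (i+1) := by
  rw [cycleGraph_adj']
  right
  rw [add_sub_cancel_left, Fin.val_one]

lemma UGaux.cyc_adj_pred (k : ℕ) (i : Fin (k+4)) : (cycleGraph (k+4)).Adj i (i-1) := by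
  rw [cycleGraph_adj']
  left
  rw [sub_sub_cancel, Fin.val_one]

lemma UGaux.fin_ne_add_two (k : ℕ) (i : Fin (k+4)) : i ≠ i + 2 := by
  intro h
  have h2 := left_eq_add.mp h
  have := congrArg Fin.val h2
  rw [Fin.val_two, Fin.val_zero] at this
  omega

lemma UGaux.fin_sub_one_ne_add_one (k : ℕ) (i : Fin (k+4)) : i - 1 ≠ i + 1 := by
  intro h
  rw [sub_eq_iff_eq_add] at h
  have e : i + 1 + 1 = i + 2 := by open Fin.CommRing in ring
  have h2 := left_eq_add.mp (h.trans e)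
  have := congrArg Fin.val h2
  rw [Fin.val_two, Fin.val_zero] at this
  omega

lemma UGaux.cyc_not_adj_two (k : ℕ) (i : Fin (k+4)) :
    ¬ (cycleGraph (k+4)).Adj i (i+2) := by
  rw [cycleGraph_adj']
  push_neg
  constructor
  · intro h
    have h1 : i - (i+2) = 1 := Fin.ext (by rw [h, Fin.val_one])
    rw [sub_eq_iff_eq_add] at h1
    have e : 1 + (i + 2) = i + 3 := by open Fin.CommRing in ring
    have h2 := left_eq_add.mp (h1.trans e)
    have := congrArg Fin.val h2
    rw [UGaux.fin_val_three, Fin.val_zero] at this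
    omega
  · intro h
    have h1 : (i+2) - i = 2 := by open Fin.CommRing in ring
    rw [h1, Fin.val_two] at h
    omega

/-- An induced 4-cycle kills chordality. -/
lemma UGaux.not_chordal_of_four {α : Type*} {G : SimpleGraph α} {a b c d : α}
    (hab : G.Adj a b) (hbc : G.Adj b c) (hcd : G.Adj c d) (hda : G.Adj d a)
    (hac : ¬ G.Adj a c) (hbd : ¬ G.Adj b d) (hac' : a ≠ c) (hbd' : b ≠ d) :
    ¬ IsChordal G := by
  intro h
  refine (h 4 le_rfl).false ?_
  refine ⟨⟨![a, b, c, d], ?_⟩, ?_⟩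
  · intro i j hij
    fin_cases i <;> fin_cases j <;> simp_all
  · intro i j
    fin_cases i <;> fin_cases j <;>
      simp [SimpleGraph.cycleGraph_adj, show (-2 : Fin 4) ≠ 1 by decide,
        show (-3 : Fin 4) = 1 by decide] <;>
      first
        | exact G.irrefl
        | exact hab | exact hab.symm | exact hbc | exact hbc.symm
        | exact hcd | exact hcd.symm | exact hda | exact hda.symm
        | exact hac | exact fun h' => hac h'.symm
        | exact hbd | exact fun h' => hbd h'.symm

section Aux
variable {F V : Type*} [Field F] [AddCommGroup V] [Module F V] {n : ℕ} (B : Module.Basis (Fin n) F V)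

lemma UGaux.repr_symm (f : Fin n → F) (i : Fin n) : B.repr (B.equivFun.symm f) i = f i := by
  rw [← B.equivFun_apply, LinearEquiv.apply_symm_apply]

lemma UGaux.adj_iff' (a b : {a : V // a ≠ 0}) :
    (compUnionGraph B).Adj a b ↔ a ≠ b ∧ ∀ j, B.repr a.1 j ≠ 0 ∨ B.repr b.1 j ≠ 0 := by
  show (a ≠ b ∧ _) ↔ _
  rw [and_congr_right_iff]
  intro _
  rw [Set.eq_univ_iff_forall]
  constructor
  · intro h j; exact h j
  · intro h j; exact h j

lemma UGaux.vec_ne_zero (f : Fin n → F) (i : Fin n) (h : f i ≠ 0) : B.equivFun.symm f ≠ 0 := by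
  intro h0
  apply h
  rw [← UGaux.repr_symm B f i, h0, map_zero]
  rfl

lemma UGaux.vec_ne_vec (f g : Fin n → F) (i : Fin n) (h : f i ≠ g i) :
    B.equivFun.symm f ≠ B.equivFun.symm g := by
  intro he
  apply h
  rw [← UGaux.repr_symm B f i, he, UGaux.repr_symm]

lemma UGaux.F2_cases {F : Type*} [Field F] [Fintype F] (hF : Fintype.card F = 2) (x : F) :
    x = 0 ∨ x = 1 := by
  classical
  have huniv : ({0, 1} : Finset F) = Finset.univ := by
    apply Finset.eq_univ_of_card
    rw [Finset.card_pair (zero_ne_one), hF]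
  have := huniv ▸ Finset.mem_univ x
  simpa using this

lemma UGaux.repr_support_inj [Fintype F] (hF : Fintype.card F = 2) {a b : V}
    (h : ∀ j, (B.repr a j ≠ 0 ↔ B.repr b j ≠ 0)) : a = b := by
  apply B.repr.injective
  ext j
  rcases UGaux.F2_cases hF (B.repr a j) with h0 | h1 <;>
    rcases UGaux.F2_cases hF (B.repr b j) with g0 | g1
  · rw [h0, g0]
  · exact absurd ((h j).mpr (by rw [g1]; exact one_ne_zero)) (by rw [h0]; simp)
  · exact absurd ((h j).mp (by rw [h1]; exact one_ne_zero)) (by rw [g0]; simp)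
  · rw [h1, g1]

/-- Master lemma: four coordinate functions giving an induced 4-cycle. -/
lemma UGaux.master (fa fb fc fd : Fin n → F)
    (ha : fa ≠ 0) (hb : fb ≠ 0) (hc : fc ≠ 0) (hd : fd ≠ 0)
    (hab : ∀ j, fa j ≠ 0 ∨ fb j ≠ 0) (hbc : ∀ j, fb j ≠ 0 ∨ fc j ≠ 0)
    (hcd : ∀ j, fc j ≠ 0 ∨ fd j ≠ 0) (hda : ∀ j, fd j ≠ 0 ∨ fa j ≠ 0)
    (hac : ¬ ∀ j, fa j ≠ 0 ∨ fc j ≠ 0) (hbd : ¬ ∀ j, fb j ≠ 0 ∨ fd j ≠ 0)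
    (habne : fa ≠ fb) (hbcne : fb ≠ fc) (hcdne : fc ≠ fd) (hdane : fd ≠ fa)
    (hacne : fa ≠ fc) (hbdne : fb ≠ fd) :
    ¬ IsChordal (compUnionGraph B) := by
  have hnz : ∀ f : Fin n → F, f ≠ 0 → B.equivFun.symm f ≠ 0 := by
    intro f hf
    obtain ⟨i, hi⟩ := Function.ne_iff.mp hf
    exact UGaux.vec_ne_zero B f i hi
  let a : {x : V // x ≠ 0} := ⟨_, hnz fa ha⟩
  let b : {x : V // x ≠ 0} := ⟨_, hnz fb hb⟩
  let c : {x : V // x ≠ 0} := ⟨_, hnz fc hc⟩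
  let d : {x : V // x ≠ 0} := ⟨_, hnz fd hd⟩
  have hsub : ∀ (f g : Fin n → F) (hf : B.equivFun.symm f ≠ 0) (hg : B.equivFun.symm g ≠ 0),
      f ≠ g → (⟨B.equivFun.symm f, hf⟩ : {x : V // x ≠ 0}) ≠ ⟨B.equivFun.symm g, hg⟩ := by
    intro f g hf hg hfg h
    exact hfg (B.equivFun.symm.injective (congrArg Subtype.val h))
  have hadj : ∀ (f g : Fin n → F) (hf : B.equivFun.symm f ≠ 0) (hg : B.equivFun.symm g ≠ 0),
      f ≠ g → (∀ j, f j ≠ 0 ∨ g j ≠ 0) →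
      (compUnionGraph B).Adj ⟨B.equivFun.symm f, hf⟩ ⟨B.equivFun.symm g, hg⟩ := by
    intro f g hf hg hfg hu
    rw [UGaux.adj_iff']
    refine ⟨hsub f g hf hg hfg, fun j => ?_⟩
    rcases hu j with h' | h'
    · left; rwa [UGaux.repr_symm]
    · right; rwa [UGaux.repr_symm]
  have hnadj : ∀ (f g : Fin n → F) (hf : B.equivFun.symm f ≠ 0) (hg : B.equivFun.symm g ≠ 0),
      (¬ ∀ j, f j ≠ 0 ∨ g j ≠ 0) →
      ¬ (compUnionGraph B).Adj ⟨B.equivFun.symm f, hf⟩ ⟨B.equivFun.symm g, hg⟩ := by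
    intro f g hf hg hu hAdj
    rw [UGaux.adj_iff'] at hAdj
    apply hu
    intro j
    rcases hAdj.2 j with h' | h'
    · left; rwa [UGaux.repr_symm] at h'
    · right; rwa [UGaux.repr_symm] at h'
  exact UGaux.not_chordal_of_four
    (hadj fa fb (hnz fa ha) (hnz fb hb) habne hab)
    (hadj fb fc (hnz fb hb) (hnz fc hc) hbcne hbc)
    (hadj fc fd (hnz fc hc) (hnz fd hd) hcdne hcd)
    (hadj fd fa (hnz fd hd) (hnz fa ha) hdane hda)
    (hnadj fa fc (hnz fa ha) (hnz fc hc) hac)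
    (hnadj fb fd (hnz fb hb) (hnz fd hd) hbd)
    (hsub fa fc (hnz fa ha) (hnz fc hc) hacne)
    (hsub fb fd (hnz fb hb) (hnz fd hd) hbdne)

/-- Construction A: an induced 4-cycle when `n ≥ 2` and `|F| ≥ 3`. -/
lemma UGaux.constructionA [Fintype F] (h2 : 2 ≤ n) (hF : 3 ≤ Fintype.card F) :
    ¬ IsChordal (compUnionGraph B) := by
  classical
  obtain ⟨α, hα⟩ : ∃ α : F, α ∉ ({0, 1} : Finset F) := by
    by_contra h
    push_neg at h
    have hsub : (Finset.univ : Finset F) ⊆ {0, 1} := fun x _ => h x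
    have hle := Finset.card_le_card hsub
    have h01 : ({0, 1} : Finset F).card ≤ 2 := Finset.card_insert_le 0 {1} |>.trans (by simp)
    rw [Finset.card_univ] at hle
    omega
  simp only [Finset.mem_insert, Finset.mem_singleton, not_or] at hα
  obtain ⟨hα0, hα1⟩ := hα
  let i0 : Fin n := ⟨0, by omega⟩
  let i1 : Fin n := ⟨1, by omega⟩
  have h10 : i1 ≠ i0 := by simp [i0, i1, Fin.ext_iff]
  apply UGaux.master B
    (fun j => if j = i0 then 1 else 0) (fun j => if j = i0 then 0 else 1)
    (fun j => if j = i0 then α else 0) (fun j => if j = i0 then 0 else α)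
  · intro h; simpa using congrFun h i0
  · intro h; have := congrFun h i1; simp [h10] at this
  · intro h; have := congrFun h i0; simp [hα0] at this
  · intro h; have := congrFun h i1; simp [h10, hα0] at this
  · intro j; by_cases hj : j = i0 <;> simp [hj]
  · intro j; by_cases hj : j = i0 <;> simp [hj, hα0]
  · intro j; by_cases hj : j = i0 <;> simp [hj, hα0]
  · intro j; by_cases hj : j = i0 <;> simp [hj, hα0]
  · intro h; rcases h i1 with h' | h' <;> simp [h10] at h'
  · intro h; rcases h i0 with h' | h' <;> simp at h'
  · intro h; have := congrFun h i0; simp at this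
  · intro h; have := congrFun h i0; simp at this; exact hα0 this.symm
  · intro h; have := congrFun h i0; simp at this; exact hα0 this
  · intro h; have := congrFun h i1; simp [h10] at this; exact hα0 this
  · intro h; have := congrFun h i0; simp [Ne.symm hα1] at this
  · intro h; have := congrFun h i1; simp [h10, Ne.symm hα1] at this

/-- Construction B: an induced 4-cycle when `n ≥ 4`. -/
lemma UGaux.constructionB (h4 : 4 ≤ n) :
    ¬ IsChordal (compUnionGraph B) := by
  classical
  let i0 : Fin n := ⟨0, by omega⟩
  let i1 : Fin n := ⟨1, by omega⟩
  let i2 : Fin n := ⟨2, by omega⟩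
  let i3 : Fin n := ⟨3, by omega⟩
  apply UGaux.master B
    (fun j => if j.val = 0 then 0 else 1)
    (fun j => if j.val = 1 ∨ j.val = 2 then 0 else 1)
    (fun j => if j.val = 0 ∨ j.val = 3 then 0 else 1)
    (fun j => if j.val = 1 then 0 else 1)
  · intro h; have := congrFun h i1; simp [i1] at this
  · intro h; have := congrFun h i0; simp [i0] at this
  · intro h; have := congrFun h i1; simp [i1] at this
  · intro h; have := congrFun h i0; simp [i0] at this
  · intro j; by_cases hj : j.val = 0
    · right; simp [hj]
    · left; simp [hj]
  · intro j; by_cases hj : j.val = 1 ∨ j.val = 2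
    · right; simp; omega
    · left; simp [hj]
  · intro j; by_cases hj : j.val = 0 ∨ j.val = 3
    · right; simp; omega
    · left; simp [hj]
  · intro j; by_cases hj : j.val = 1
    · right; simp [hj]
    · left; simp [hj]
  · intro h; rcases h i0 with h' | h' <;> simp [i0] at h'
  · intro h; rcases h i1 with h' | h' <;> simp [i1] at h'
  · intro h; have := congrFun h i1; simp [i1] at this
  · intro h; have := congrFun h i0; simp [i0] at this
  · intro h; have := congrFun h i3; simp [i3] at this
  · intro h; have := congrFun h i0; simp [i0] at this
  · intro h; have := congrFun h i3; simp [i3] at this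
  · intro h; have := congrFun h i2; simp [i2] at this

lemma UGaux.skel_exists (a : {x : V // x ≠ 0}) : ∃ j, B.repr a.1 j ≠ 0 := by
  by_contra h
  push_neg at h
  apply a.2
  apply B.repr.map_eq_zero_iff.mp
  ext j
  exact h j

/-- `n = 1`: the graph is complete, hence chordal. -/
lemma UGaux.chordal_n1 (B : Module.Basis (Fin 1) F V) : IsChordal (compUnionGraph B) := by
  intro m hm
  obtain ⟨k, rfl⟩ : ∃ k, m = k + 4 := ⟨m - 4, by omega⟩
  constructor
  intro f
  have hne : f 0 ≠ f (0 + 2) := fun h => UGaux.fin_ne_add_two k 0 (f.injective h)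
  have hadj : (compUnionGraph B).Adj (f 0) (f (0 + 2)) := by
    rw [UGaux.adj_iff']
    refine ⟨hne, fun j => Or.inl ?_⟩
    obtain ⟨j', hj'⟩ := UGaux.skel_exists B (f 0)
    rwa [Subsingleton.elim j' j] at hj'
  exact UGaux.cyc_not_adj_two k 0 (f.map_rel_iff.mp hadj)

/-- If there are at most 3 nonzero vectors, the graph is chordal. -/
lemma UGaux.chordal_of_card [Fintype F] (hc : Fintype.card F ^ n ≤ 4) :
    IsChordal (compUnionGraph B) := by
  classical
  intro m hm
  constructor
  intro f
  letI : Fintype V := Fintype.ofEquiv _ B.equivFun.toEquiv.symm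
  have hV : Fintype.card V = Fintype.card F ^ n := by
    rw [Fintype.card_congr B.equivFun.toEquiv, Fintype.card_fun, Fintype.card_fin]
  have hsub : Fintype.card {a : V // a ≠ 0} = Fintype.card V - 1 := by
    rw [Fintype.card_subtype_compl (fun a : V => a = 0), Fintype.card_subtype_eq]
  have hle := Fintype.card_le_of_injective f f.injective
  rw [Fintype.card_fin, hsub, hV] at hle
  omega

/-- `n = 3` and `|F| = 2`: the graph is chordal. -/
lemma UGaux.chordal_n3 [Fintype F] (B : Module.Basis (Fin 3) F V) (hF : Fintype.card F = 2) :
    IsChordal (compUnionGraph B) := by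
  classical
  intro m hm
  obtain ⟨k, rfl⟩ : ∃ k, m = k + 4 := ⟨m - 4, by omega⟩
  constructor
  intro f
  let T : Fin (k+4) → Finset (Fin 3) :=
    fun i => Finset.univ.filter (fun j => B.repr (f i).1 j ≠ 0)
  have memT : ∀ i j, j ∈ T i ↔ B.repr (f i).1 j ≠ 0 := by
    intro i j; simp [T]
  have hType : ∀ i i' : Fin (k+4), f i ≠ f i' →
      (∀ j, B.repr (f i).1 j ≠ 0 ∨ B.repr (f i').1 j ≠ 0) →
      (cycleGraph (k+4)).Adj i i' :=
    fun i i' h1 h2 => f.map_rel_iff.mp ((UGaux.adj_iff' B _ _).mpr ⟨h1, h2⟩)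
  have hdet : ∀ i i' : Fin (k+4), T i = T i' → i = i' := by
    intro i i' h
    apply f.injective
    apply Subtype.ext
    apply UGaux.repr_support_inj B hF
    intro j
    rw [← memT i j, ← memT i' j, h]
  have hnuniv : ∀ i, T i ≠ Finset.univ := by
    intro i hu
    apply UGaux.cyc_not_adj_two k i
    apply hType
    · exact fun h => UGaux.fin_ne_add_two k i (f.injective h)
    · intro j
      left
      rw [← memT]
      rw [hu]
      exact Finset.mem_univ j
  have hUsucc : ∀ i j, j ∈ T i ∨ j ∈ T (i+1) := by
    intro i j
    have := ((UGaux.adj_iff' B _ _).mp (f.map_rel_iff.mpr (UGaux.cyc_adj_succ k i))).2 j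
    rw [memT, memT]
    exact this
  have hUpred : ∀ i j, j ∈ T i ∨ j ∈ T (i-1) := by
    intro i j
    have := ((UGaux.adj_iff' B _ _).mp (f.map_rel_iff.mpr (UGaux.cyc_adj_pred k i))).2 j
    rw [memT, memT]
    exact this
  have hcard : ∀ i, (T i).card = 2 := by
    intro i
    have h1 : (T i).Nonempty := by
      obtain ⟨j, hj⟩ := UGaux.skel_exists B (f i)
      exact ⟨j, (memT i j).mpr hj⟩
    have h3 : (T i).card ≤ 3 := by
      have := Finset.card_le_univ (T i)
      simpa using this
    have hne3 : (T i).card ≠ 3 := by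
      intro h
      apply hnuniv i
      apply Finset.eq_univ_of_card
      rw [h]
      simp
    have hne1 : (T i).card ≠ 1 := by
      intro h
      obtain ⟨x, hx⟩ := Finset.card_eq_one.mp h
      have key : ∀ t : Fin (k+4), (∀ j, j ∈ T i ∨ j ∈ T t) → T t = {x}ᶜ := by
        intro t hU
        have hmem : ∀ j : Fin 3, j ≠ x → j ∈ T t := by
          intro j hj
          rcases hU j with h' | h'
          · rw [hx, Finset.mem_singleton] at h'
            exact absurd h' hj
          · exact h'
        have hx' : x ∉ T t := by
          intro hxin
          apply hnuniv t
          apply Finset.eq_univ_iff_forall.mpr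
          intro j
          by_cases hj : j = x
          · rwa [hj]
          · exact hmem j hj
        ext j
        rw [Finset.mem_compl, Finset.mem_singleton]
        constructor
        · intro hj he
          rw [he] at hj
          exact hx' hj
        · exact hmem j
      have hplus : T (i+1) = {x}ᶜ := key (i+1) (hUsucc i)
      have hminus : T (i-1) = {x}ᶜ := key (i-1) (hUpred i)
      exact UGaux.fin_sub_one_ne_add_one k i (hdet _ _ (hminus.trans hplus.symm))
    have h0 := h1.card_pos
    omega
  have hcompl : ∀ i, ∃ x, (T i)ᶜ = {x} := by
    intro i
    apply Finset.card_eq_one.mp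
    rw [Finset.card_compl, hcard]
    simp
  choose g hg using hcompl
  have ginj : Function.Injective g := by
    intro i i' h
    apply hdet
    apply compl_injective
    rw [hg i, hg i', h]
  have := Fintype.card_le_of_injective g ginj
  simp only [Fintype.card_fin] at this
  omega

end Aux

/-- For a finite dimensional vector space `V` over a finite field `F`
with basis `B`, the nonzero component union graph `UG(V)` is chordal iff either
`dim V = 1`, or `dim V ∈ {2, 3}` and `|F| = 2`. -/
theorem stmt9 {F V : Type*} [Field F] [Fintype F] [AddCommGroup V] [Module F V]
    {n : ℕ} (hn : 1 ≤ n) (B : Module.Basis (Fin n) F V) :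
    IsChordal (compUnionGraph B) ↔
      (n = 1 ∨ ((n = 2 ∨ n = 3) ∧ Fintype.card F = 2)) := by
  constructor
  · intro hch
    rcases Nat.lt_or_ge n 2 with h2 | h2
    · left; omega
    · by_cases hF : Fintype.card F = 2
      · by_cases h23 : n = 2 ∨ n = 3
        · exact Or.inr ⟨h23, hF⟩
        · exfalso
          push_neg at h23
          exact UGaux.constructionB B (by omega) hch
      · exfalso
        have hF2 : 1 < Fintype.card F := Fintype.one_lt_card
        exact UGaux.constructionA B h2 (by omega) hch
  · rintro (h1 | ⟨h23, hF⟩)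
    · subst h1
      exact UGaux.chordal_n1 B
    · rcases h23 with h2 | h3
      · subst h2
        exact UGaux.chordal_of_card B (by rw [hF]; norm_num)
      · subst h3
        exact UGaux.chordal_n3 B hF
end

section
/- Let V be a finite dimensional vector space over a finite field F with basis B. The nonzero component union graph UG(V) is perfect if and only if dim(V) ≤ 4. -/
/-- A graph is perfect if for every induced subgraph the chromatic number equals
the clique number. -/
def IsPerfect {α : Type*} (G : SimpleGraph α) : Prop :=
  ∀ s : Set α, (G.induce s).chromaticNumber = ((G.induce s).cliqueNum : ℕ∞)

lemma ug_core (T : Finset (Finset (Fin 4))) (hT : ∀ S ∈ T, S ≠ ∅) :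
    ∃ (k : ℕ) (c : Finset (Fin 4) → ℕ) (fam : Finset (Finset (Fin 4))),
      fam ⊆ T ∧ fam.card = k ∧
      (∀ S ∈ fam, ∀ S' ∈ fam, S ≠ S' → S ∩ S' = ∅) ∧
      (∀ S ∈ T, c S < k) ∧
      (∀ S ∈ T, ∀ S' ∈ T, S ≠ S' → S ∩ S' = ∅ → c S ≠ c S') := by
  classical
  by_cases hE : ∃ S₁ ∈ T, ∃ S₂ ∈ T, S₁ ≠ S₂ ∧ S₁ ∩ S₂ = ∅
  · by_cases h3 : ∃ S₁ ∈ T, ∃ S₂ ∈ T, ∃ S₃ ∈ T, S₁ ≠ S₂ ∧ S₁ ≠ S₃ ∧ S₂ ≠ S₃ ∧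
        S₁ ∩ S₂ = ∅ ∧ S₁ ∩ S₃ = ∅ ∧ S₂ ∩ S₃ = ∅
    · by_cases h4 : ∀ i : Fin 4, ({i} : Finset (Fin 4)) ∈ T
      · -- k = 4 : color by minimum
        refine ⟨4, fun S => if h : S.Nonempty then (S.min' h : ℕ) else 0,
          {{0},{1},{2},{3}}, ?_, by decide, ?_, ?_, ?_⟩
        · intro S hS
          simp only [Finset.mem_insert, Finset.mem_singleton] at hS
          rcases hS with rfl | rfl | rfl | rfl <;> exact h4 _
        · intro S hS S' hS' hne
          simp only [Finset.mem_insert, Finset.mem_singleton] at hS hS'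
          rcases hS with rfl | rfl | rfl | rfl <;> rcases hS' with rfl | rfl | rfl | rfl <;>
            first | exact (hne rfl).elim | decide
        · intro S hS
          dsimp only
          have h : S.Nonempty := Finset.nonempty_iff_ne_empty.mpr (hT S hS)
          rw [dif_pos h]
          exact (S.min' h).isLt
        · intro S hS S' hS' hne hd hc
          dsimp only at hc
          have h : S.Nonempty := Finset.nonempty_iff_ne_empty.mpr (hT S hS)
          have h' : S'.Nonempty := Finset.nonempty_iff_ne_empty.mpr (hT S' hS')
          rw [dif_pos h, dif_pos h'] at hc
          have heq : S.min' h = S'.min' h' := Fin.val_injective hc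
          have : S.min' h ∈ S ∩ S' :=
            Finset.mem_inter.mpr ⟨S.min'_mem h, heq ▸ S'.min'_mem h'⟩
          rw [hd] at this
          exact absurd this (Finset.notMem_empty _)
      · -- k = 3 : some singleton {i} is missing
        push_neg at h4
        obtain ⟨i, hi⟩ := h4
        obtain ⟨S₁, hS₁, S₂, hS₂, S₃, hS₃, h12, h13, h23, d12, d13, d23⟩ := h3
        have herase : ∀ S ∈ T, (S.erase i).Nonempty := by
          intro S hS
          rw [Finset.nonempty_iff_ne_empty]
          intro h
          rw [Finset.erase_eq_empty_iff] at h
          rcases h with rfl | rfl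
          · exact hT _ hS rfl
          · exact hi hS
        have hemb : ∀ i j j' : Fin 4, j ≠ i → j' ≠ i →
            (if (j : ℕ) < (i : ℕ) then (j : ℕ) else (j : ℕ) - 1) =
            (if (j' : ℕ) < (i : ℕ) then (j' : ℕ) else (j' : ℕ) - 1) → j = j' := by decide
        have hembbd : ∀ i j : Fin 4, j ≠ i →
            (if (j : ℕ) < (i : ℕ) then (j : ℕ) else (j : ℕ) - 1) < 3 := by decide
        refine ⟨3, fun S => if h : (S.erase i).Nonempty then
            (if (((S.erase i).min' h : Fin 4) : ℕ) < (i : ℕ) then (((S.erase i).min' h) : ℕ)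
              else (((S.erase i).min' h) : ℕ) - 1) else 0,
          {S₁, S₂, S₃}, ?_, ?_, ?_, ?_, ?_⟩
        · intro S hS
          simp only [Finset.mem_insert, Finset.mem_singleton] at hS
          rcases hS with rfl | rfl | rfl <;> assumption
        · rw [Finset.card_insert_of_notMem (by simp [h12, h13]),
            Finset.card_insert_of_notMem (by simp [h23]), Finset.card_singleton]
        · intro S hS S' hS' hne
          simp only [Finset.mem_insert, Finset.mem_singleton] at hS hS'
          rcases hS with rfl | rfl | rfl <;> rcases hS' with rfl | rfl | rfl <;>
            first | exact (hne rfl).elim | assumption |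
              (rw [Finset.inter_comm]; assumption)
        · intro S hS
          dsimp only
          rw [dif_pos (herase S hS)]
          exact hembbd i _ (Finset.ne_of_mem_erase ((S.erase i).min'_mem (herase S hS)))
        · intro S hS S' hS' hne hd hc
          dsimp only at hc
          rw [dif_pos (herase S hS), dif_pos (herase S' hS')] at hc
          have hj := Finset.ne_of_mem_erase ((S.erase i).min'_mem (herase S hS))
          have hj' := Finset.ne_of_mem_erase ((S'.erase i).min'_mem (herase S' hS'))
          have heq := hemb i _ _ hj hj' hc
          have hm : (S.erase i).min' (herase S hS) ∈ S ∩ S' := by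
            refine Finset.mem_inter.mpr ⟨Finset.mem_of_mem_erase ((S.erase i).min'_mem _), ?_⟩
            rw [heq]
            exact Finset.mem_of_mem_erase ((S'.erase i).min'_mem _)
          rw [hd] at hm
          exact absurd hm (Finset.notMem_empty _)
    · -- k = 2 : triangle-free with an edge
      obtain ⟨S₁, hS₁, S₂, hS₂, hne12, hd12⟩ := hE
      obtain ⟨i, hclaim⟩ : ∃ i : Fin 4, ∀ S ∈ T, ∀ S' ∈ T, S ≠ S' → S ∩ S' = ∅ →
          (i ∈ S ↔ i ∉ S') := by
        by_cases hsing : ∃ a b : Fin 4, a ≠ b ∧ ({a} : Finset (Fin 4)) ∈ T ∧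
            ({b} : Finset (Fin 4)) ∈ T
        · obtain ⟨a, b, hab, ha, hb⟩ := hsing
          have hmeet : ∀ S ∈ T, a ∈ S ∨ b ∈ S := by
            intro S hS
            by_contra h
            push_neg at h
            obtain ⟨hna, hnb⟩ := h
            refine h3 ⟨{a}, ha, {b}, hb, S, hS, ?_, ?_, ?_, ?_, ?_, ?_⟩
            · simp [hab]
            · intro h; rw [← h] at hna; simp at hna
            · intro h; rw [← h] at hnb; simp at hnb
            · exact Finset.singleton_inter_of_notMem (by simp [hab])
            · exact Finset.singleton_inter_of_notMem hna
            · exact Finset.singleton_inter_of_notMem hnb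
          refine ⟨a, fun S hS S' hS' hne hd => ⟨fun haS haS' => ?_, fun haS' => ?_⟩⟩
          · have : a ∈ S ∩ S' := Finset.mem_inter.mpr ⟨haS, haS'⟩
            rw [hd] at this
            exact absurd this (Finset.notMem_empty _)
          · by_contra haS
            have hbS : b ∈ S := (hmeet S hS).resolve_left haS
            have hbS' : b ∈ S' := (hmeet S' hS').resolve_left haS'
            have : b ∈ S ∩ S' := Finset.mem_inter.mpr ⟨hbS, hbS'⟩
            rw [hd] at this
            exact absurd this (Finset.notMem_empty _)
        · obtain ⟨i, huniq⟩ : ∃ i : Fin 4, ∀ j : Fin 4, ({j} : Finset (Fin 4)) ∈ T → j = i := by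
            by_cases hone : ∃ a : Fin 4, ({a} : Finset (Fin 4)) ∈ T
            · obtain ⟨a, ha⟩ := hone
              refine ⟨a, fun j hj => ?_⟩
              by_contra h
              exact hsing ⟨j, a, h, hj, ha⟩
            · exact ⟨0, fun j hj => absurd ⟨j, hj⟩ hone⟩
          refine ⟨i, fun S hS S' hS' hne hd => ⟨fun hiS hiS' => ?_, fun hiS' => ?_⟩⟩
          · have : i ∈ S ∩ S' := Finset.mem_inter.mpr ⟨hiS, hiS'⟩
            rw [hd] at this
            exact absurd this (Finset.notMem_empty _)
          · by_contra hiS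
            have hsub : S ∪ S' ⊆ Finset.univ.erase i := by
              intro x hx
              rcases Finset.mem_union.mp hx with h | h
              · exact Finset.mem_erase.mpr ⟨fun he => hiS (he ▸ h), Finset.mem_univ _⟩
              · exact Finset.mem_erase.mpr ⟨fun he => hiS' (he ▸ h), Finset.mem_univ _⟩
            have hcard : S.card + S'.card ≤ 3 := by
              have h1 := Finset.card_le_card hsub
              rw [Finset.card_union_of_disjoint
                (Finset.disjoint_iff_inter_eq_empty.mpr hd)] at h1
              have h2 : (Finset.univ.erase i).card = 3 := by
                rw [Finset.card_erase_of_mem (Finset.mem_univ _)]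
                simp
              omega
            have hp : 0 < S.card := Finset.card_pos.mpr
              (Finset.nonempty_iff_ne_empty.mpr (hT S hS))
            have hp' : 0 < S'.card := Finset.card_pos.mpr
              (Finset.nonempty_iff_ne_empty.mpr (hT S' hS'))
            have h1 : S.card = 1 ∨ S'.card = 1 := by omega
            rcases h1 with h1 | h1
            · obtain ⟨j, rfl⟩ := Finset.card_eq_one.mp h1
              have := huniq j hS
              exact hiS (by simp [this])
            · obtain ⟨j, rfl⟩ := Finset.card_eq_one.mp h1
              have := huniq j hS'
              exact hiS' (by simp [this])
      refine ⟨2, fun S => if i ∈ S then 0 else 1, {S₁, S₂}, ?_, ?_, ?_, ?_, ?_⟩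
      · intro S hS
        simp only [Finset.mem_insert, Finset.mem_singleton] at hS
        rcases hS with rfl | rfl <;> assumption
      · rw [Finset.card_insert_of_notMem (by simp [hne12]), Finset.card_singleton]
      · intro S hS S' hS' hne
        simp only [Finset.mem_insert, Finset.mem_singleton] at hS hS'
        rcases hS with rfl | rfl <;> rcases hS' with rfl | rfl <;>
          first | exact (hne rfl).elim | assumption | (rw [Finset.inter_comm]; assumption)
      · intro S hS
        dsimp only
        split_ifs <;> omega
      · intro S hS S' hS' hne hd hc
        have hiff := hclaim S hS S' hS' hne hd
        dsimp only at hc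
        by_cases h1 : i ∈ S <;> by_cases h2 : i ∈ S' <;> simp [h1, h2] at hc <;> tauto
  · -- k ≤ 1 : no edges
    push_neg at hE
    rcases T.eq_empty_or_nonempty with rfl | ⟨S₀, hS₀⟩
    · exact ⟨0, fun _ => 0, ∅, by simp, by simp, by simp, by simp, by simp⟩
    · refine ⟨1, fun _ => 0, {S₀}, by simp [hS₀], by simp, ?_, by simp, ?_⟩
      · intro S hS S' hS' hne
        simp only [Finset.mem_singleton] at hS hS'
        exact (hne (hS.trans hS'.symm)).elim
      · intro S hS S' hS' hne hd
        exact absurd hd (Finset.nonempty_iff_ne_empty.mp (hE S hS S' hS' hne))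

section Helpers

variable {F V : Type*} [Field F] [AddCommGroup V] [Module F V] {n : ℕ}
    (B : Module.Basis (Fin n) F V)

/-- The complement of the skeleton, as a `Finset`. -/
noncomputable def typB (a : V) : Finset (Fin n) :=
  @Finset.filter _ (fun i => B.repr a i = 0) (Classical.decPred _) Finset.univ

lemma mem_typB {a : V} {i : Fin n} : i ∈ typB B a ↔ B.repr a i = 0 := by
  simp [typB]

lemma compUnionGraph_adj_iff (x y : {a : V // a ≠ 0}) :
    (compUnionGraph B).Adj x y ↔ x ≠ y ∧ typB B x.1 ∩ typB B y.1 = ∅ := by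
  change (x ≠ y ∧ skel B x.1 ∪ skel B y.1 = Set.univ) ↔ _
  refine and_congr_right (fun _ => ?_)
  rw [Set.eq_univ_iff_forall, Finset.eq_empty_iff_forall_notMem]
  refine forall_congr' (fun i => ?_)
  simp only [Set.mem_union, Finset.mem_inter, mem_typB, skel, Set.mem_setOf_eq]
  tauto

lemma repr_sum_basis (S : Finset (Fin n)) (i : Fin n) :
    B.repr (∑ j ∈ S, B j) i = if i ∈ S then 1 else 0 := by
  rw [map_sum, Finsupp.finset_sum_apply]
  simp only [Module.Basis.repr_self, Finsupp.single_apply]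
  rw [Finset.sum_ite_eq' S i (fun _ => (1 : F))]

lemma typB_sum_basis (S : Finset (Fin n)) : typB B (∑ j ∈ S, B j) = Sᶜ := by
  ext i
  rw [mem_typB, repr_sum_basis, Finset.mem_compl]
  by_cases h : i ∈ S <;> simp [h]

lemma sum_basis_ne_zero {S : Finset (Fin n)} (hS : S.Nonempty) : (∑ j ∈ S, B j) ≠ 0 := by
  obtain ⟨i, hi⟩ := hS
  intro h
  have h2 := repr_sum_basis B S i
  rw [h, map_zero, if_pos hi] at h2
  simp at h2

end Helpers

lemma perfect_of_le_four {F V : Type*} [Field F] [Fintype F] [AddCommGroup V] [Module F V]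
    {n : ℕ} (hle : n ≤ 4) (B : Module.Basis (Fin n) F V) : IsPerfect (compUnionGraph B) := by
  classical
  have hfinV : Finite V := Finite.of_equiv _ B.equivFun.symm.toEquiv
  intro s
  letI : Fintype ↥s := Fintype.ofFinite _
  set e : Fin n ↪ Fin 4 := Fin.castLEEmb hle with he
  set t4 : V → Finset (Fin 4) := fun a => (typB B a).map e with ht4
  have ht4inj : ∀ a b : V, t4 a = t4 b → typB B a = typB B b := fun a b h =>
    Finset.map_injective e h
  have ht4empty : ∀ a : V, t4 a = ∅ ↔ typB B a = ∅ := by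
    intro a; simp [ht4]
  have ht4inter : ∀ a b : V, t4 a ∩ t4 b = (typB B a ∩ typB B b).map e := fun a b =>
    (Finset.map_inter _ _).symm
  set T : Finset (Finset (Fin 4)) :=
    Finset.univ.filter (fun S => S ≠ ∅ ∧ ∃ x : ↥s, t4 x.1.1 = S) with hTdef
  have hT : ∀ S ∈ T, S ≠ ∅ := by
    intro S hS
    rw [hTdef, Finset.mem_filter] at hS
    exact hS.2.1
  obtain ⟨k, c, fam, hfamsub, hfamcard, hfamdisj, hcbd, hcprop⟩ := ug_core T hT
  set Full : Finset ↥s := Finset.univ.filter (fun x => typB B x.1.1 = ∅) with hFull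
  set m := Full.card with hm
  have hmemT : ∀ x : ↥s, typB B x.1.1 ≠ ∅ → t4 x.1.1 ∈ T := by
    intro x hx
    rw [hTdef, Finset.mem_filter]
    refine ⟨Finset.mem_univ _, ?_, ⟨x, rfl⟩⟩
    rw [Ne, ht4empty]; exact hx
  have hFullmem : ∀ x : ↥s, typB B x.1.1 = ∅ → x ∈ Full := fun x hx =>
    Finset.mem_filter.mpr ⟨Finset.mem_univ _, hx⟩
  set g : ↥s → ℕ := fun x => if hx : typB B x.1.1 = ∅ then
      k + (Full.equivFin ⟨x, hFullmem x hx⟩ : ℕ) else c (t4 x.1.1) with hg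
  have hgbd : ∀ x : ↥s, g x < k + m := by
    intro x; rw [hg]; dsimp only; split_ifs with hx
    · have := (Full.equivFin ⟨x, hFullmem x hx⟩).isLt; omega
    · have := hcbd _ (hmemT x hx); omega
  have hcol : ((compUnionGraph B).induce s).Colorable (k + m) := by
    refine ⟨SimpleGraph.Coloring.mk (fun x => ⟨g x, hgbd x⟩) ?_⟩
    intro x y hadj hgeq
    have hGadj : (compUnionGraph B).Adj x.1 y.1 := hadj
    rw [compUnionGraph_adj_iff] at hGadj
    obtain ⟨hne, hd⟩ := hGadj
    have hge : g x = g y := by simpa using congrArg Fin.val hgeq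
    rw [hg] at hge; dsimp only at hge
    by_cases hx : typB B x.1.1 = ∅ <;> by_cases hy : typB B y.1.1 = ∅
    · rw [dif_pos hx, dif_pos hy] at hge
      have h1 : (Full.equivFin ⟨x, hFullmem x hx⟩ : ℕ) =
          (Full.equivFin ⟨y, hFullmem y hy⟩ : ℕ) := by omega
      have h2 : (⟨x, hFullmem x hx⟩ : {z // z ∈ Full}) = ⟨y, hFullmem y hy⟩ :=
        Full.equivFin.injective (Fin.val_injective h1)
      have h3 : x = y := congrArg Subtype.val h2
      exact hne (congrArg Subtype.val h3)
    · rw [dif_pos hx, dif_neg hy] at hge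
      have := hcbd _ (hmemT y hy); omega
    · rw [dif_neg hx, dif_pos hy] at hge
      have := hcbd _ (hmemT x hx); omega
    · rw [dif_neg hx, dif_neg hy] at hge
      have hdisj4 : t4 x.1.1 ∩ t4 y.1.1 = ∅ := by
        rw [ht4inter, hd]; simp
      have hne4 : t4 x.1.1 ≠ t4 y.1.1 := by
        intro h
        rw [h, Finset.inter_self] at hdisj4
        exact hy ((ht4empty _).mp hdisj4)
      exact hcprop _ (hmemT x hx) _ (hmemT y hy) hne4 hdisj4 hge
  have h1 : ((compUnionGraph B).induce s).chromaticNumber ≤ ((k + m : ℕ) : ℕ∞) :=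
    hcol.chromaticNumber_le
  -- the clique
  have hrep : ∀ S ∈ fam, ∃ x : ↥s, t4 x.1.1 = S := by
    intro S hS
    have h := hfamsub hS
    rw [hTdef, Finset.mem_filter] at h
    exact h.2.2
  choose rep hrepspec using hrep
  have hembrepinj : Function.Injective (fun Sh : {S // S ∈ fam} => rep Sh.1 Sh.2) := by
    intro a b h
    have ha := hrepspec a.1 a.2
    have hb := hrepspec b.1 b.2
    apply Subtype.ext
    rw [← ha, ← hb]
    exact congrArg (fun z => t4 z.1.1) h
  set RepF : Finset ↥s := fam.attach.map ⟨fun Sh => rep Sh.1 Sh.2, hembrepinj⟩ with hRepF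
  have hmemRepF : ∀ x : ↥s, x ∈ RepF → ∃ S, ∃ hS : S ∈ fam, rep S hS = x := by
    intro x hx
    rw [hRepF, Finset.mem_map] at hx
    obtain ⟨Sh, _, hSh⟩ := hx
    exact ⟨Sh.1, Sh.2, hSh⟩
  have htypRep : ∀ (S) (hS : S ∈ fam), typB B (rep S hS).1.1 ≠ ∅ := by
    intro S hS h
    have h4 : t4 (rep S hS).1.1 = ∅ := (ht4empty _).mpr h
    rw [hrepspec S hS] at h4
    exact hT S (hfamsub hS) h4
  have hdisjFR : Disjoint Full RepF := by
    rw [Finset.disjoint_left]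
    intro x hx hx2
    obtain ⟨S, hS, rfl⟩ := hmemRepF x hx2
    exact htypRep S hS (Finset.mem_filter.mp hx).2
  set K : Finset ↥s := Full ∪ RepF with hK
  have hKcard : K.card = m + k := by
    rw [hK, Finset.card_union_of_disjoint hdisjFR, hRepF, Finset.card_map,
      Finset.card_attach, hfamcard]
  have hKclique : ((compUnionGraph B).induce s).IsClique K := by
    intro x hx y hy hxy
    rw [Finset.mem_coe, hK, Finset.mem_union] at hx hy
    show (compUnionGraph B).Adj x.1 y.1
    rw [compUnionGraph_adj_iff]
    refine ⟨fun h => hxy (Subtype.ext h), ?_⟩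
    rcases hx with hx | hx
    · rw [(Finset.mem_filter.mp hx).2, Finset.empty_inter]
    rcases hy with hy | hy
    · rw [(Finset.mem_filter.mp hy).2, Finset.inter_empty]
    obtain ⟨S, hS, rfl⟩ := hmemRepF x hx
    obtain ⟨S', hS', rfl⟩ := hmemRepF y hy
    have hSne : S ≠ S' := by
      intro h
      subst h
      exact hxy rfl
    have hd4 : t4 (rep S hS).1.1 ∩ t4 (rep S' hS').1.1 = ∅ := by
      rw [hrepspec S hS, hrepspec S' hS']
      exact hfamdisj S hS S' hS' hSne
    rw [ht4inter] at hd4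
    rw [← Finset.map_eq_empty (f := e)]
    exact hd4
  have h2 : m + k ≤ ((compUnionGraph B).induce s).cliqueNum := by
    have := SimpleGraph.IsClique.card_le_cliqueNum (tc := hKclique)
    rwa [hKcard] at this
  have h3 : ((((compUnionGraph B).induce s).cliqueNum : ℕ) : ℕ∞) ≤
      ((compUnionGraph B).induce s).chromaticNumber := by
    obtain ⟨t, ht⟩ := SimpleGraph.exists_isNClique_cliqueNum
      (G := (compUnionGraph B).induce s)
    have := ht.isClique.card_le_chromaticNumber
    rwa [ht.card_eq] at this
  refine le_antisymm (h1.trans ?_) h3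
  exact_mod_cast (by omega : k + m ≤ m + k).trans h2

/-- The pair `{2k, 2k+1}` (mod 5): an induced 5-cycle pattern in the
disjointness graph of 2-subsets of a 5-set. -/
def tpair (k : Fin 5) : Finset (Fin 5) := {2*k, 2*k+1}

lemma tpair_inj : ∀ k l : Fin 5, tpair k = tpair l → k = l := by decide
lemma tpair_succ_disj : ∀ k : Fin 5, tpair k ∩ tpair (k+1) = ∅ := by decide
lemma tpair_no_triangle : ∀ k l m : Fin 5, k ≠ l → k ≠ m → l ≠ m →
    tpair k ∩ tpair l = ∅ → tpair k ∩ tpair m = ∅ → tpair l ∩ tpair m = ∅ → False := by decide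
lemma tpair_not_mem : ∀ k : Fin 5, 2*k+2 ∉ tpair k := by decide
lemma fin5_ne_succ : ∀ k : Fin 5, k ≠ k + 1 := by decide

lemma not_perfect_of_five_le {F V : Type*} [Field F] [AddCommGroup V] [Module F V]
    {n : ℕ} (hn5 : 5 ≤ n) (B : Module.Basis (Fin n) F V) : ¬ IsPerfect (compUnionGraph B) := by
  classical
  intro hperf
  have he5inj : Function.Injective (fun j : Fin 5 => (⟨(j : ℕ), lt_of_lt_of_le j.isLt hn5⟩ : Fin n)) := by
    intro u w h
    have h2 : (u : ℕ) = (w : ℕ) := congrArg (fun x : Fin n => (x : ℕ)) h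
    exact Fin.ext h2
  set eE : Fin 5 ↪ Fin n := ⟨_, he5inj⟩ with heE
  set Tk : Fin 5 → Finset (Fin n) := fun k => (tpair k).map eE with hTk
  set a : Fin 5 → V := fun k => ∑ j ∈ (Tk k)ᶜ, B j with ha
  have hSknonempty : ∀ k, ((Tk k)ᶜ : Finset (Fin n)).Nonempty := by
    intro k
    refine ⟨eE (2*k+2), Finset.mem_compl.mpr ?_⟩
    rw [hTk]
    intro hmem
    exact tpair_not_mem k (Finset.mem_map' eE |>.mp hmem)
  have hanz : ∀ k, a k ≠ 0 := fun k => sum_basis_ne_zero B (hSknonempty k)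
  have htypa : ∀ k, typB B (a k) = Tk k := by
    intro k
    rw [ha]
    dsimp only
    rw [typB_sum_basis, compl_compl]
  have hainj : ∀ k l : Fin 5, a k = a l → k = l := by
    intro k l h
    have h1 : Tk k = Tk l := by rw [← htypa k, ← htypa l, h]
    rw [hTk] at h1
    exact tpair_inj k l (Finset.map_injective eE h1)
  set s : Set {x : V // x ≠ 0} :=
    Set.range (fun k : Fin 5 => (⟨a k, hanz k⟩ : {x : V // x ≠ 0})) with hs
  set v : Fin 5 → ↥s := fun k => ⟨⟨a k, hanz k⟩, ⟨k, rfl⟩⟩ with hv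
  -- adjacency criterion
  have hadj : ∀ k l : Fin 5, k ≠ l → tpair k ∩ tpair l = ∅ →
      ((compUnionGraph B).induce s).Adj (v k) (v l) := by
    intro k l hkl hd
    show (compUnionGraph B).Adj (v k).1 (v l).1
    rw [compUnionGraph_adj_iff]
    constructor
    · intro h
      exact hkl (hainj k l (congrArg Subtype.val h))
    · rw [hv]
      dsimp only
      rw [htypa, htypa, hTk]
      dsimp only
      rw [← Finset.map_inter, hd, Finset.map_empty]
  -- clique number is at most 2
  have homega : ((compUnionGraph B).induce s).cliqueNum ≤ 2 := by
    rw [SimpleGraph.cliqueNum]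
    have hne : {N | ∃ t, ((compUnionGraph B).induce s).IsNClique N t}.Nonempty :=
      ⟨0, ∅, SimpleGraph.isNClique_empty.mpr rfl⟩
    apply csSup_le hne
    rintro N ⟨t, ht⟩
    by_contra hN
    push_neg at hN
    obtain ⟨x, y, z, hxt, hyt, hzt, hxy, hxz, hyz⟩ := Finset.two_lt_card_iff.mp
      (by rw [ht.card_eq]; exact hN)
    obtain ⟨kx, hkx⟩ := x.2
    obtain ⟨ky, hky⟩ := y.2
    obtain ⟨kz, hkz⟩ := z.2
    have hdisj : ∀ (p q : ↥s) (kp kq : Fin 5),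
        (⟨a kp, hanz kp⟩ : {w : V // w ≠ 0}) = p.1 →
        (⟨a kq, hanz kq⟩ : {w : V // w ≠ 0}) = q.1 → p ≠ q →
        ((compUnionGraph B).induce s).Adj p q →
        (kp ≠ kq ∧ tpair kp ∩ tpair kq = ∅) := by
      intro p q kp kq hp hq hpq hA
      have hGA : (compUnionGraph B).Adj p.1 q.1 := hA
      rw [compUnionGraph_adj_iff] at hGA
      obtain ⟨hne, hd⟩ := hGA
      rw [← hp, ← hq] at hd
      dsimp only at hd
      rw [htypa, htypa, hTk] at hd
      dsimp only at hd
      rw [← Finset.map_inter, Finset.map_eq_empty] at hd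
      refine ⟨?_, hd⟩
      intro h
      subst h
      exact hne (hp ▸ hq ▸ rfl)
    have h1 := hdisj x y kx ky hkx hky hxy (ht.isClique hxt hyt hxy)
    have h2 := hdisj x z kx kz hkx hkz hxz (ht.isClique hxt hzt hxz)
    have h3 := hdisj y z ky kz hky hkz hyz (ht.isClique hyt hzt hyz)
    exact tpair_no_triangle kx ky kz h1.1 h2.1 h3.1 h1.2 h2.2 h3.2
  -- chromatic number ≤ 2, so 2-colorable
  have hchrom : ((compUnionGraph B).induce s).chromaticNumber ≤ ((2 : ℕ) : ℕ∞) := by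
    rw [hperf s]
    exact_mod_cast homega
  obtain ⟨C⟩ := SimpleGraph.chromaticNumber_le_iff_colorable.mp hchrom
  -- but the graph contains an odd cycle on v 0, ..., v 4
  have hC : ∀ k : Fin 5, C (v k) ≠ C (v (k + 1)) := fun k =>
    C.valid (hadj k (k+1) (fin5_ne_succ k) (tpair_succ_disj k))
  have h0 := hC 0
  have h1 := hC 1
  have h2 := hC 2
  have h3 := hC 3
  have h4 := hC 4
  rw [(by decide : (0 + 1 : Fin 5) = 1)] at h0
  rw [(by decide : (1 + 1 : Fin 5) = 2)] at h1
  rw [(by decide : (2 + 1 : Fin 5) = 3)] at h2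
  rw [(by decide : (3 + 1 : Fin 5) = 4)] at h3
  rw [(by decide : (4 + 1 : Fin 5) = 0)] at h4
  have hv0 := (C (v 0)).isLt
  have hv1 := (C (v 1)).isLt
  have hv2 := (C (v 2)).isLt
  have hv3 := (C (v 3)).isLt
  have hv4 := (C (v 4)).isLt
  have n0 : (C (v 0)).val ≠ (C (v 1)).val := fun h => h0 (Fin.ext h)
  have n1 : (C (v 1)).val ≠ (C (v 2)).val := fun h => h1 (Fin.ext h)
  have n2 : (C (v 2)).val ≠ (C (v 3)).val := fun h => h2 (Fin.ext h)
  have n3 : (C (v 3)).val ≠ (C (v 4)).val := fun h => h3 (Fin.ext h)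
  have n4 : (C (v 4)).val ≠ (C (v 0)).val := fun h => h4 (Fin.ext h)
  omega

/-- For a finite dimensional vector space `V` over a finite field `F`
with basis `B`, the nonzero component union graph `UG(V)` is perfect iff
`dim V ≤ 4`. -/
theorem stmt11 {F V : Type*} [Field F] [Fintype F] [AddCommGroup V] [Module F V]
    {n : ℕ} (hn : 1 ≤ n) (B : Module.Basis (Fin n) F V) :
    IsPerfect (compUnionGraph B) ↔ n ≤ 4 := by
  constructor
  · intro hperf
    by_contra h
    push_neg at h
    exact not_perfect_of_five_le (by omega) B hperf
  · intro hle
    exact perfect_of_le_four hle B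
end

section
/- Let F be a finite field and V an n-dimensional vector space over F with basis B. Then the reduced graph (IG(V))_red of the nonzero component graph is isomorphic to the graph join Γ^c((ℤ/2)^n) ∨ K_1, where (ℤ/2)^n is the product ring of n copies of the field with two elements. -/
/-- The relation `u ≃ v` iff `u = v`, or `u` and `v` are adjacent with
`N(u) \ {v} = N(v) \ {u}`; it is an equivalence relation. -/
def twinSetoid {α : Type*} (G : SimpleGraph α) : Setoid α where
  r u v := u = v ∨ (G.Adj u v ∧ G.neighborSet u \ {v} = G.neighborSet v \ {u})
  iseqv := by
    constructor
    · intro x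
      exact Or.inl rfl
    · rintro x y (rfl | ⟨h, hs⟩)
      · exact Or.inl rfl
      · exact Or.inr ⟨h.symm, hs.symm⟩
    · rintro x y z (rfl | ⟨hxy, hsxy⟩) h2
      · exact h2
      rcases h2 with rfl | ⟨hyz, hsyz⟩
      · exact Or.inr ⟨hxy, hsxy⟩
      by_cases hxz : x = z
      · exact Or.inl hxz
      right
      have hzx : z ∈ G.neighborSet x := by
        have h3 : z ∈ G.neighborSet y \ {x} :=
          ⟨(G.mem_neighborSet _ _).mpr hyz, fun h => hxz (Set.mem_singleton_iff.mp h).symm⟩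
        rw [← hsxy] at h3
        exact h3.1
      refine ⟨(G.mem_neighborSet _ _).mp hzx, ?_⟩
      ext w
      simp only [Set.mem_diff, Set.mem_singleton_iff, SimpleGraph.mem_neighborSet]
      constructor
      · rintro ⟨hw, hwz⟩
        by_cases hwy : w = y
        · subst hwy
          exact ⟨hyz.symm, fun h => G.ne_of_adj hxy h.symm⟩
        · have h1 : w ∈ G.neighborSet y := by
            have h3 : w ∈ G.neighborSet x \ {y} := ⟨(G.mem_neighborSet _ _).mpr hw, hwy⟩
            rw [hsxy] at h3
            exact h3.1
          have h2 : w ∈ G.neighborSet z := by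
            have h3 : w ∈ G.neighborSet y \ {z} := ⟨h1, hwz⟩
            rw [hsyz] at h3
            exact h3.1
          exact ⟨(G.mem_neighborSet _ _).mp h2, fun h => G.ne_of_adj hw h.symm⟩
      · rintro ⟨hw, hwx⟩
        by_cases hwy : w = y
        · subst hwy
          exact ⟨hxy, G.ne_of_adj hyz⟩
        · have h1 : w ∈ G.neighborSet y := by
            have h3 : w ∈ G.neighborSet z \ {y} := ⟨(G.mem_neighborSet _ _).mpr hw, hwy⟩
            rw [← hsyz] at h3
            exact h3.1
          have h2 : w ∈ G.neighborSet x := by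
            have h3 : w ∈ G.neighborSet y \ {x} := ⟨h1, hwx⟩
            rw [← hsxy] at h3
            exact h3.1
          exact ⟨(G.mem_neighborSet _ _).mp h2, fun h => G.ne_of_adj hw h.symm⟩

/-- The reduced graph `G_red`: vertices are the `≃`-classes, and distinct classes
`[u]`, `[v]` are adjacent iff `u` and `v` are adjacent in `G`. -/
def reducedGraph {α : Type*} (G : SimpleGraph α) :
    SimpleGraph (Quotient (twinSetoid G)) where
  Adj x y := x ≠ y ∧ ∃ u v : α, Quotient.mk (twinSetoid G) u = x ∧
    Quotient.mk (twinSetoid G) v = y ∧ G.Adj u v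
  symm := by
    constructor
    rintro x y ⟨hne, u, v, hu, hv, h⟩
    exact ⟨hne.symm, v, u, hv, hu, h.symm⟩
  loopless := ⟨fun x h => h.1 rfl⟩

/-- The join of two graphs: disjoint union together with all cross edges. -/
def graphJoin {α β : Type*} (G : SimpleGraph α) (H : SimpleGraph β) :
    SimpleGraph (α ⊕ β) where
  Adj x y :=
    match x, y with
    | Sum.inl a, Sum.inl b => G.Adj a b
    | Sum.inr a, Sum.inr b => H.Adj a b
    | _, _ => True
  symm := by
    constructor
    rintro (a|a) (b|b) h
    · exact h.symm
    · trivial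
    · trivial
    · exact h.symm
  loopless := by
    constructor
    rintro (a|a) h
    · exact G.irrefl h
    · exact H.irrefl h

/-- The zero-divisor graph of a commutative ring. -/
def ringZDG (R : Type*) [CommRing R] :
    SimpleGraph {x : R // x ≠ 0 ∧ ∃ y, y ≠ 0 ∧ x * y = 0} where
  Adj x y := x ≠ y ∧ x.1 * y.1 = 0
  symm := by
    constructor
    rintro x y ⟨h1, h2⟩
    exact ⟨h1.symm, by rwa [mul_comm]⟩
  loopless := ⟨fun x h => h.1 rfl⟩

section Aux

lemma zmod2_cases (a : ZMod 2) : a = 0 ∨ a = 1 := by revert a; decide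

variable {F V : Type*} [Field F] [AddCommGroup V] [Module F V] {n : ℕ}

open Classical in
noncomputable def phiV (B : Module.Basis (Fin n) F V) (a : V) : Fin n → ZMod 2 :=
  fun i => if B.repr a i = 0 then 0 else 1

open Classical in
noncomputable def psiV (B : Module.Basis (Fin n) F V) (x : Fin n → ZMod 2) : V :=
  B.equivFun.symm fun i => if x i = 0 then (0 : F) else 1

variable (B : Module.Basis (Fin n) F V)

lemma phiV_apply_eq_zero {a : V} {i : Fin n} : phiV B a i = 0 ↔ B.repr a i = 0 := by
  unfold phiV
  split_ifs with h
  · simp [h]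
  · simp [h]

lemma mem_skel {a : V} {i : Fin n} : i ∈ skel B a ↔ B.repr a i ≠ 0 := Iff.rfl

lemma phiV_eq_zero {a : V} : phiV B a = 0 ↔ a = 0 := by
  constructor
  · intro h
    have hr : B.repr a = 0 := by
      ext i
      have := (phiV_apply_eq_zero B).mp (congrFun h i)
      simpa using this
    simpa using (LinearEquiv.map_eq_zero_iff _).mp hr
  · intro h
    subst h
    funext i
    rw [Pi.zero_apply, phiV_apply_eq_zero]
    simp

lemma phiV_ne_zero {a : V} (ha : a ≠ 0) : phiV B a ≠ 0 :=
  fun h => ha ((phiV_eq_zero B).mp h)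

lemma skel_eq_iff {a b : V} : skel B a = skel B b ↔ phiV B a = phiV B b := by
  rw [Set.ext_iff, funext_iff]
  apply forall_congr'
  intro i
  simp only [mem_skel]
  unfold phiV
  split_ifs with h1 h2 h2 <;> simp [h1, h2]

lemma inter_nonempty_iff {a b : V} :
    (skel B a ∩ skel B b).Nonempty ↔ phiV B a * phiV B b ≠ 0 := by
  rw [Function.ne_iff]
  constructor
  · rintro ⟨i, hia, hib⟩
    refine ⟨i, ?_⟩
    simp only [Pi.mul_apply, Pi.zero_apply]
    unfold phiV
    rw [if_neg hia, if_neg hib]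
    decide
  · rintro ⟨i, hi⟩
    simp only [Pi.mul_apply, Pi.zero_apply] at hi
    refine ⟨i, fun h0 => hi ?_, fun h0 => hi ?_⟩
    · rw [(phiV_apply_eq_zero B).mpr h0, zero_mul]
    · rw [(phiV_apply_eq_zero B).mpr h0, mul_zero]

lemma skel_nonempty {a : V} (ha : a ≠ 0) : (skel B a).Nonempty := by
  by_contra h
  rw [Set.not_nonempty_iff_eq_empty, Set.eq_empty_iff_forall_notMem] at h
  apply ha
  have hr : B.repr a = 0 := by
    ext i
    have := h i
    simp only [mem_skel, not_not] at this
    simpa using this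
  simpa using (LinearEquiv.map_eq_zero_iff _).mp hr

lemma skel_basis (i : Fin n) : skel B (B i) = {i} := by
  ext j
  simp only [mem_skel, Module.Basis.repr_self, Set.mem_singleton_iff]
  rw [Finsupp.single_apply]
  split_ifs with h
  · simp [h.symm]
  · have hji : ¬ j = i := fun hh => h hh.symm
    simp [hji]

lemma compGraph_adj_def {u v : {a : V // a ≠ 0}} :
    (compGraph B).Adj u v ↔ u ≠ v ∧ (skel B u.1 ∩ skel B v.1).Nonempty := Iff.rfl

lemma compGraph_adj {u v : {a : V // a ≠ 0}} :
    (compGraph B).Adj u v ↔ u ≠ v ∧ phiV B u.1 * phiV B v.1 ≠ 0 := by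
  rw [compGraph_adj_def, inter_nonempty_iff]

lemma reducedGraph_adj_def {α : Type*} (G : SimpleGraph α) {x y : Quotient (twinSetoid G)} :
    (reducedGraph G).Adj x y ↔ x ≠ y ∧ ∃ u v : α, Quotient.mk (twinSetoid G) u = x ∧
      Quotient.mk (twinSetoid G) v = y ∧ G.Adj u v := Iff.rfl

lemma ringZDG_adj_def {R : Type*} [CommRing R]
    {x y : {x : R // x ≠ 0 ∧ ∃ y, y ≠ 0 ∧ x * y = 0}} :
    (ringZDG R).Adj x y ↔ x ≠ y ∧ x.1 * y.1 = 0 := Iff.rfl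

lemma twin_of_phi_eq {u v : {a : V // a ≠ 0}} (h : phiV B u.1 = phiV B v.1) :
    (twinSetoid (compGraph B)).r u v := by
  by_cases huv : u = v
  · exact Or.inl huv
  right
  have hsk : skel B u.1 = skel B v.1 := (skel_eq_iff B).mpr h
  have hadj : (compGraph B).Adj u v := by
    refine (compGraph_adj_def B).mpr ⟨huv, ?_⟩
    rw [hsk, Set.inter_self]
    exact skel_nonempty B v.2
  refine ⟨hadj, ?_⟩
  ext c
  simp only [Set.mem_diff, Set.mem_singleton_iff, SimpleGraph.mem_neighborSet,
    compGraph_adj_def]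
  constructor
  · rintro ⟨⟨hne, hint⟩, hcv⟩
    exact ⟨⟨fun hh => hcv hh.symm, by rwa [hsk] at hint⟩, fun hcu => hne hcu.symm⟩
  · rintro ⟨⟨hne, hint⟩, hcu⟩
    exact ⟨⟨fun hh => hcu hh.symm, by rwa [← hsk] at hint⟩, fun hcv => hne hcv.symm⟩

lemma skel_subset_of {u v : {a : V // a ≠ 0}} (hadj : (compGraph B).Adj u v)
    (hs : (compGraph B).neighborSet u \ {v} = (compGraph B).neighborSet v \ {u}) :
    skel B u.1 ⊆ skel B v.1 := by
  intro i hi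
  by_contra hib
  set e : {a : V // a ≠ 0} := ⟨B i, B.ne_zero i⟩ with he
  have hske : skel B e.1 = {i} := skel_basis B i
  have heu : e ≠ u := by
    intro h
    have h1 : skel B u.1 = {i} := by rw [← h]; exact hske
    obtain ⟨j, hju, hjv⟩ := ((compGraph_adj_def B).mp hadj).2
    rw [h1, Set.mem_singleton_iff] at hju
    subst hju
    exact hib hjv
  have hev : e ≠ v := by
    intro h
    apply hib
    rw [← h, hske]
    exact rfl
  have hmem : e ∈ (compGraph B).neighborSet u \ {v} := by
    refine ⟨?_, hev⟩
    rw [SimpleGraph.mem_neighborSet]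
    exact (compGraph_adj_def B).mpr ⟨fun h => heu h.symm, ⟨i, hi, by rw [hske]; exact rfl⟩⟩
  rw [hs] at hmem
  obtain ⟨hadj2, -⟩ := hmem
  rw [SimpleGraph.mem_neighborSet] at hadj2
  obtain ⟨j, hjv, hje⟩ := ((compGraph_adj_def B).mp hadj2).2
  rw [hske, Set.mem_singleton_iff] at hje
  subst hje
  exact hib hjv

lemma twin_iff {u v : {a : V // a ≠ 0}} :
    (twinSetoid (compGraph B)).r u v ↔ phiV B u.1 = phiV B v.1 := by
  constructor
  · rintro (rfl | ⟨hadj, hs⟩)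
    · rfl
    · exact (skel_eq_iff B).mp (Set.Subset.antisymm (skel_subset_of B hadj hs)
        (skel_subset_of B hadj.symm hs.symm))
  · exact twin_of_phi_eq B

lemma reduced_adj_iff (u v : {a : V // a ≠ 0}) :
    (reducedGraph (compGraph B)).Adj (Quotient.mk (twinSetoid (compGraph B)) u)
      (Quotient.mk (twinSetoid (compGraph B)) v) ↔
      phiV B u.1 ≠ phiV B v.1 ∧ phiV B u.1 * phiV B v.1 ≠ 0 := by
  rw [reducedGraph_adj_def]
  constructor
  · rintro ⟨hne, a, b, ha, hb, hadj⟩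
    have h1 : phiV B a.1 = phiV B u.1 := (twin_iff B).mp (Quotient.exact ha)
    have h2 : phiV B b.1 = phiV B v.1 := (twin_iff B).mp (Quotient.exact hb)
    have h3 := ((compGraph_adj B).mp hadj).2
    rw [h1, h2] at h3
    exact ⟨fun h => hne (Quotient.sound ((twin_iff B).mpr h)), h3⟩
  · rintro ⟨hne, hprod⟩
    refine ⟨fun h => hne ((twin_iff B).mp (Quotient.exact h)), u, v, rfl, rfl, ?_⟩
    exact (compGraph_adj B).mpr ⟨fun h => hne (by rw [h]), hprod⟩

lemma repr_psiV (x : Fin n → ZMod 2) (i : Fin n) :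
    B.repr (psiV B x) i = if x i = 0 then (0 : F) else 1 := by
  classical
  have h1 : B.repr (psiV B x) i = B.equivFun (psiV B x) i := by
    rw [Module.Basis.equivFun_apply]
  rw [h1]
  unfold psiV
  rw [LinearEquiv.apply_symm_apply]

lemma phiV_psiV (x : Fin n → ZMod 2) : phiV B (psiV B x) = x := by
  funext i
  unfold phiV
  rw [repr_psiV]
  rcases zmod2_cases (x i) with h | h <;> rw [h] <;> simp

lemma psiV_ne_zero {x : Fin n → ZMod 2} (hx : x ≠ 0) : psiV B x ≠ 0 := by
  intro h
  apply hx
  rw [← phiV_psiV B x]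
  rw [h]
  exact (phiV_eq_zero B).mpr rfl

lemma zd_of_ne_one {m : ℕ} (x : Fin m → ZMod 2) (h : x ≠ 1) :
    ∃ y, y ≠ 0 ∧ x * y = 0 := by
  obtain ⟨i, hi⟩ := Function.ne_iff.mp h
  have hxi : x i = 0 := by
    rcases zmod2_cases (x i) with h0 | h1
    · exact h0
    · exact absurd h1 (by simpa using hi)
  refine ⟨Pi.single i 1, ?_, ?_⟩
  · intro h0
    have := congrFun h0 i
    rw [Pi.single_eq_same] at this
    exact one_ne_zero this
  · funext j
    by_cases hj : j = i
    · subst hj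
      simp [hxi]
    · simp [Pi.single_eq_of_ne hj]

lemma ne_one_of_zd {m : ℕ} {x : Fin m → ZMod 2} (h : ∃ y, y ≠ 0 ∧ x * y = 0) : x ≠ 1 := by
  rintro rfl
  obtain ⟨y, hy, hxy⟩ := h
  exact hy (by rwa [one_mul] at hxy)

open Classical in
noncomputable def fwd (B : Module.Basis (Fin n) F V) :
    {a : V // a ≠ 0} → {x : Fin n → ZMod 2 // x ≠ 0 ∧ ∃ y, y ≠ 0 ∧ x * y = 0} ⊕ Fin 1 :=
  fun a =>
    if h : phiV B a.1 = 1 then Sum.inr 0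
    else Sum.inl ⟨phiV B a.1, phiV_ne_zero B a.2, zd_of_ne_one _ h⟩

lemma graphJoin_adj_inr_inr {α β : Type*} (G : SimpleGraph α) (H : SimpleGraph β) (a b : β) :
    (graphJoin G H).Adj (Sum.inr a) (Sum.inr b) ↔ H.Adj a b := Iff.rfl

lemma graphJoin_adj_inl_inl {α β : Type*} (G : SimpleGraph α) (H : SimpleGraph β) (a b : α) :
    (graphJoin G H).Adj (Sum.inl a) (Sum.inl b) ↔ G.Adj a b := Iff.rfl

lemma graphJoin_adj_inl_inr {α β : Type*} (G : SimpleGraph α) (H : SimpleGraph β) (a : α) (b : β) :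
    (graphJoin G H).Adj (Sum.inl a) (Sum.inr b) ↔ True := Iff.rfl

lemma graphJoin_adj_inr_inl {α β : Type*} (G : SimpleGraph α) (H : SimpleGraph β) (a : β) (b : α) :
    (graphJoin G H).Adj (Sum.inr a) (Sum.inl b) ↔ True := Iff.rfl

end Aux

/-- For a finite field `F` and an `n`-dimensional `F`-vector space
`V` with basis `B`, the reduced graph `(IG(V))_red` is isomorphic to the join
`Γᶜ((ℤ/2)ⁿ) ∨ K₁`. -/
theorem stmt16 {F V : Type*} [Field F] [Fintype F] [AddCommGroup V] [Module F V]
    {n : ℕ} (hn : 1 ≤ n) (B : Module.Basis (Fin n) F V) :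
    Nonempty (reducedGraph (compGraph B) ≃g
      graphJoin ((ringZDG (Fin n → ZMod 2))ᶜ) (⊤ : SimpleGraph (Fin 1))) := by
  classical
  have hone : (1 : Fin n → ZMod 2) ≠ 0 := by
    intro h
    have := congrFun h ⟨0, hn⟩
    simpa using this
  have hf : ∀ u v : {a : V // a ≠ 0},
      (twinSetoid (compGraph B)).r u v → fwd B u = fwd B v := by
    intro u v h
    have hphi := (twin_iff B).mp h
    simp only [fwd, hphi]
  refine ⟨⟨⟨Quotient.lift (fwd B) hf,
    Sum.elim
      (fun x => Quotient.mk (twinSetoid (compGraph B)) ⟨psiV B x.1, psiV_ne_zero B x.2.1⟩)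
      (fun _ => Quotient.mk (twinSetoid (compGraph B)) ⟨psiV B 1, psiV_ne_zero B hone⟩),
    ?_, ?_⟩, ?_⟩⟩
  · -- left_inv
    refine Quotient.ind (fun a => ?_)
    have hred : Quotient.lift (fwd B) hf (Quotient.mk (twinSetoid (compGraph B)) a)
        = fwd B a := rfl
    rw [hred]
    unfold fwd
    split_ifs with h
    · exact Quotient.sound ((twin_iff B).mpr (by rw [phiV_psiV]; exact h.symm))
    · exact Quotient.sound ((twin_iff B).mpr (by rw [phiV_psiV]))
  · -- right_inv
    rintro (x | j)
    · show fwd B ⟨psiV B x.1, psiV_ne_zero B x.2.1⟩ = Sum.inl x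
      have hx1 : phiV B (psiV B x.1) = x.1 := phiV_psiV B x.1
      have hne1 : ¬ phiV B (psiV B x.1) = 1 := by
        rw [hx1]; exact ne_one_of_zd x.2.2
      unfold fwd
      rw [dif_neg hne1]
      exact congrArg Sum.inl (Subtype.ext hx1)
    · show fwd B ⟨psiV B 1, psiV_ne_zero B hone⟩ = Sum.inr j
      unfold fwd
      rw [dif_pos (phiV_psiV B 1)]
      exact congrArg Sum.inr (Subsingleton.elim _ _)
  · -- map_rel_iff
    intro q r
    induction q using Quotient.ind
    induction r using Quotient.ind
    rename_i u v
    rw [reduced_adj_iff B u v]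
    show (graphJoin ((ringZDG (Fin n → ZMod 2))ᶜ)
        (⊤ : SimpleGraph (Fin 1))).Adj (fwd B u) (fwd B v) ↔ _
    unfold fwd
    by_cases hu : phiV B u.1 = 1 <;> by_cases hv : phiV B v.1 = 1
    · rw [dif_pos hu, dif_pos hv, graphJoin_adj_inr_inr]
      simp [hu, hv]
    · rw [dif_pos hu, dif_neg hv, graphJoin_adj_inr_inl, true_iff]
      constructor
      · rw [hu]
        exact fun hh => hv hh.symm
      · rw [hu, one_mul]
        exact phiV_ne_zero B v.2
    · rw [dif_neg hu, dif_pos hv, graphJoin_adj_inl_inr, true_iff]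
      constructor
      · rw [hv]
        exact hu
      · rw [hv, mul_one]
        exact phiV_ne_zero B u.2
    · rw [dif_neg hu, dif_neg hv, graphJoin_adj_inl_inl, SimpleGraph.compl_adj, ringZDG_adj_def]
      constructor
      · rintro ⟨hne, hnadj⟩
        exact ⟨fun h => hne (Subtype.ext h), fun h0 => hnadj ⟨hne, h0⟩⟩
      · rintro ⟨hne, h0⟩
        exact ⟨fun h => hne (congrArg Subtype.val h), fun hadj => h0 hadj.2⟩
end
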